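/- Suppose g, f : ℝ^d × I_z → ℝ are 2L-periodic and continuous in v, continuously differentiable in z, and bounded together with their z-derivatives, and suppose b is continuously differentiable in z with |b(s,z)| ≤ C_b and |∂_z b(s,z)| ≤ C_b. Then the map z ↦ Q^R(g,f)(v,z) is differentiable and the Leibniz rule ∂_z Q^R(g,f)(v,z) = Q^R(∂_z g, f)(v,z) + Q^R(g, ∂_z f)(v,z) + Q^R_{∂_z b}(g,f)(v,z) holds for every (v,z), where Q^R_{∂_z b} denotes the operator obtained from Q^R by replacing the angular factor b by ∂_z b. -/

import Mathlib

/- Setup (one-dimensional random space `d_z = 1`): velocity space `ℝ^d`,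
periodic cube `D_L`, random domain `I_z ⊂ ℝ` with probability density `w`,
sphere measure, truncated collision operators, and mixed Sobolev norms
(`z`-derivatives are classical derivatives `deriv`, velocity derivatives of
order `j` are measured through `iteratedFDeriv`). -/

noncomputable section
open MeasureTheory Metric Real Function
open scoped ENNReal RealInnerProductSpace

/-- Velocity space `ℝ^d`. -/
abbrev Vs (d : ℕ) := EuclideanSpace ℝ (Fin d)

/-- The periodic cell `D_L = [-L,L]^d`. -/
def cube (d : ℕ) (L : ℝ) : Set (Vs d) := {v | ∀ i, |v i| ≤ L}

/-- The (surface) measure on the unit sphere `S^{d-1}`. -/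
def sphMeas (d : ℕ) : Measure (sphere (0 : Vs d) 1) := (volume : Measure (Vs d)).toSphere

/-- Lebesgue measure restricted to the periodic cell `D_L`. -/
def μv (d : ℕ) (L : ℝ) : Measure (Vs d) := volume.restrict (cube d L)

/-- The probability measure `π(z)dz` on `I_z ⊂ ℝ` (density `w`, restricted to `Iz`). -/
def μz1 (Iz : Set ℝ) (w : ℝ → ℝ) : Measure ℝ :=
  (volume.withDensity fun z => ENNReal.ofReal (w z)).restrict Iz

/-- Product measure on `D_L × I_z`. -/
def μp (d : ℕ) (L : ℝ) (Iz : Set ℝ) (w : ℝ → ℝ) : Measure (Vs d × ℝ) :=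
  (μv d L).prod (μz1 Iz w)

/-- `2L`-periodicity in the velocity variable. -/
def PeriodicV {d : ℕ} (L : ℝ) (g : Vs d → ℝ → ℝ) : Prop :=
  ∀ (v : Vs d) (z : ℝ) (i : Fin d), g (v + EuclideanSpace.single i (2 * L)) z = g v z

/-- Truncated gain operator `Q^{R,+}(g,f)(v,z)`. -/
def QRp {d : ℕ} (R : ℝ) (Φ : ℝ → ℝ) (b : ℝ → ℝ → ℝ)
    (g f : Vs d → ℝ → ℝ) (v : Vs d) (z : ℝ) : ℝ :=
  ∫ q in closedBall (0 : Vs d) R,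
    (∫ σ, Φ ‖q‖ * b ⟪(σ : Vs d), ‖q‖⁻¹ • q⟫ z *
      g (v - (1 / 2 : ℝ) • q - (‖q‖ / 2) • (σ : Vs d)) z *
      f (v - (1 / 2 : ℝ) • q + (‖q‖ / 2) • (σ : Vs d)) z ∂(sphMeas d))

/-- Truncated loss operator `Q^{R,-}(g,f)(v,z)`. -/
def QRm {d : ℕ} (R : ℝ) (Φ : ℝ → ℝ) (b : ℝ → ℝ → ℝ)
    (g f : Vs d → ℝ → ℝ) (v : Vs d) (z : ℝ) : ℝ :=
  f v z * ∫ q in closedBall (0 : Vs d) R,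
    (∫ σ, Φ ‖q‖ * b ⟪(σ : Vs d), ‖q‖⁻¹ • q⟫ z * g (v - q) z ∂(sphMeas d))

/-- Full truncated collision operator `Q^R = Q^{R,+} - Q^{R,-}`. -/
def QRfull {d : ℕ} (R : ℝ) (Φ : ℝ → ℝ) (b : ℝ → ℝ → ℝ)
    (g f : Vs d → ℝ → ℝ) (v : Vs d) (z : ℝ) : ℝ :=
  QRp R Φ b g f v z - QRm R Φ b g f v z

/-- `l`-th derivative in the random variable `z`. -/
def zder {d : ℕ} (l : ℕ) (f : Vs d → ℝ → ℝ) (v : Vs d) (z : ℝ) : ℝ := deriv^[l] (f v) z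

/-- The mixed Sobolev norm `‖f‖_{H^k_v H^r_z}` (its square is the sum over `j ≤ k`,
`l ≤ r` of the squared `L²_{v,z}` norms of `∂_v^j ∂_z^l f`). -/
def normHkvHrz (d : ℕ) (L : ℝ) (Iz : Set ℝ) (w : ℝ → ℝ) (k r : ℕ)
    (f : Vs d → ℝ → ℝ) : ℝ≥0∞ :=
  (∑ j ∈ Finset.range (k + 1), ∑ l ∈ Finset.range (r + 1),
    ∫⁻ x, (‖iteratedFDeriv ℝ j (fun v => zder l f v x.2) x.1‖₊ : ℝ≥0∞) ^ 2
      ∂(μp d L Iz w)) ^ (1 / 2 : ℝ)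

/-- The norm `‖g‖_{L¹_v H^r_z} = ∫_{D_L} ( Σ_{l ≤ r} ∫ |∂_z^l g|² dπ )^{1/2} dv`. -/
def normL1vHrz (d : ℕ) (L : ℝ) (Iz : Set ℝ) (w : ℝ → ℝ) (r : ℕ)
    (g : Vs d → ℝ → ℝ) : ℝ≥0∞ :=
  ∫⁻ v, (∑ l ∈ Finset.range (r + 1),
    ∫⁻ z, (‖zder l g v z‖₊ : ℝ≥0∞) ^ 2 ∂(μz1 Iz w)) ^ (1 / 2 : ℝ) ∂(μv d L)

/-- The norm `‖h‖_{H^r_z}` of a function of the random variable alone. -/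
def normHrz (Iz : Set ℝ) (w : ℝ → ℝ) (r : ℕ) (h : ℝ → ℝ) : ℝ≥0∞ :=
  (∑ l ∈ Finset.range (r + 1),
    ∫⁻ z, (‖deriv^[l] h z‖₊ : ℝ≥0∞) ^ 2 ∂(μz1 Iz w)) ^ (1 / 2 : ℝ)

/-- The norm `‖f⁻‖_{L²_v H¹_z}` of the negative part:
`‖f⁻‖² = ‖f⁻‖²_{L²_{v,z}} + ‖1_{{f ≤ 0}} ∂_z f‖²_{L²_{v,z}}`. -/
def normNegL2vH1z (d : ℕ) (L : ℝ) (Iz : Set ℝ) (w : ℝ → ℝ)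
    (f : Vs d → ℝ → ℝ) : ℝ≥0∞ :=
  ((∫⁻ x, (‖max (-(f x.1 x.2)) 0‖₊ : ℝ≥0∞) ^ 2 ∂(μp d L Iz w)) +
    ∫⁻ x, (if f x.1 x.2 ≤ 0 then (‖deriv (f x.1) x.2‖₊ : ℝ≥0∞) ^ 2 else 0)
      ∂(μp d L Iz w)) ^ (1 / 2 : ℝ)


/- Each integrand of `Q^R` is `Φ(|q|)` times a product of the angular factor and values of
`g`, `f`; it is jointly measurable and bounded by `Φ(|q|)` times a constant, uniformly in `z`,
and so is its `z`-derivative given by the product rule. In polar coordinates `Φ(|·|)` is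
integrable on the ball `|q| ≤ R` as soon as `Φ` is integrable on `[0, R]`, so dominated
convergence allows differentiating under the `q`- and `σ`-integrals, and the Leibniz rule is
the product rule under the integral sign. -/

open Set

section ParametricIntegral

variable {X Y : Type*} [MeasurableSpace X] [MeasurableSpace Y]

theorem hasDerivAt_integral_of_forall_abs_le {μ : Measure X} {F F' : ℝ → X → ℝ}
    {bound : X → ℝ} {z : ℝ} (hF : ∀ t, AEStronglyMeasurable (F t) μ)
    (hFz : Integrable (F z) μ) (hF'z : AEStronglyMeasurable (F' z) μ)
    (hF'_le : ∀ t x, |F' t x| ≤ bound x) (hbound : Integrable bound μ)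
    (hdiff : ∀ t x, HasDerivAt (F · x) (F' t x) t) :
    HasDerivAt (fun t => ∫ x, F t x ∂μ) (∫ x, F' z x ∂μ) z :=
  (hasDerivAt_integral_of_dominated_loc_of_deriv_le Filter.univ_mem (.of_forall hF) hFz hF'z
    (.of_forall fun x t _ => hF'_le t x) hbound (.of_forall fun x t _ => hdiff t x)).2

def DominatedBy (w : X → ℝ) (h : X → Y → ℝ) : Prop :=
  Measurable (uncurry h) ∧ ∀ x y, |h x y| ≤ w x

namespace DominatedBy

variable {w w₁ w₂ : X → ℝ} {h h₁ h₂ : X → Y → ℝ}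

lemma of_nonneg (hw : Measurable w) (hw0 : ∀ x, 0 ≤ w x) :
    DominatedBy w (fun x (_ : Y) => w x) :=
  ⟨hw.comp measurable_fst, fun x _ => (abs_of_nonneg (hw0 x)).le⟩

lemma add (hh₁ : DominatedBy w₁ h₁) (hh₂ : DominatedBy w₂ h₂) :
    DominatedBy (fun x => w₁ x + w₂ x) (fun x y => h₁ x y + h₂ x y) :=
  ⟨hh₁.1.add hh₂.1, fun x y => (abs_add_le _ _).trans (add_le_add (hh₁.2 x y) (hh₂.2 x y))⟩

lemma mul (hh : DominatedBy w h) {k : X → Y → ℝ} {c : ℝ} (hk : Measurable (uncurry k))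
    (hkc : ∀ x y, |k x y| ≤ c) :
    DominatedBy (fun x => w x * c) (fun x y => h x y * k x y) :=
  ⟨hh.1.mul hk, fun x y => by
    rw [abs_mul]
    exact mul_le_mul (hh.2 x y) (hkc x y) (abs_nonneg _) ((abs_nonneg _).trans (hh.2 x y))⟩

variable {μ : Measure X} {ν : Measure Y} [IsFiniteMeasure ν]

lemma integrable (hh : DominatedBy w h) (x : X) : Integrable (h x) ν :=
  (integrable_const (w x)).mono' (hh.1.comp measurable_prodMk_left).aestronglyMeasurable
    (.of_forall (hh.2 x))

lemma abs_integral_le (hh : DominatedBy w h) (x : X) :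
    |∫ y, h x y ∂ν| ≤ w x * ν.real univ :=
  norm_integral_le_of_norm_le_const (f := h x) (.of_forall (hh.2 x))

lemma aestronglyMeasurable_integral (hh : DominatedBy w h) :
    AEStronglyMeasurable (fun x => ∫ y, h x y ∂ν) μ :=
  hh.1.stronglyMeasurable.integral_prod_right'.aestronglyMeasurable

lemma integrable_integral (hw : Integrable w μ) (hh : DominatedBy w h) :
    Integrable (fun x => ∫ y, h x y ∂ν) μ :=
  (hw.mul_const (ν.real univ)).mono' hh.aestronglyMeasurable_integral
    (.of_forall hh.abs_integral_le)

end DominatedBy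

variable {μ : Measure X} {ν : Measure Y} [IsFiniteMeasure ν] {w w' : X → ℝ}

lemma integral_integral_add {w₁ w₂ : X → ℝ} {h₁ h₂ : X → Y → ℝ} (hw₁ : Integrable w₁ μ)
    (hw₂ : Integrable w₂ μ) (hh₁ : DominatedBy w₁ h₁) (hh₂ : DominatedBy w₂ h₂) :
    ∫ x, ∫ y, (h₁ x y + h₂ x y) ∂ν ∂μ = ∫ x, ∫ y, h₁ x y ∂ν ∂μ + ∫ x, ∫ y, h₂ x y ∂ν ∂μ := by
  rw [← integral_add (hh₁.integrable_integral hw₁) (hh₂.integrable_integral hw₂)]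
  exact integral_congr_ae (.of_forall fun x => integral_add (hh₁.integrable x) (hh₂.integrable x))

theorem hasDerivAt_integral_integral {H H' : ℝ → X → Y → ℝ} (hw : Integrable w μ)
    (hw' : Integrable w' μ) (hH : ∀ t, DominatedBy w (H t)) (hH' : ∀ t, DominatedBy w' (H' t))
    (hdiff : ∀ t x y, HasDerivAt (H · x y) (H' t x y) t) (z : ℝ) :
    HasDerivAt (fun t => ∫ x, ∫ y, H t x y ∂ν ∂μ) (∫ x, ∫ y, H' z x y ∂ν ∂μ) z := by
  have inner (t : ℝ) (x : X) : HasDerivAt (fun s => ∫ y, H s x y ∂ν) (∫ y, H' t x y ∂ν) t :=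
    hasDerivAt_integral_of_forall_abs_le (fun s => ((hH s).integrable x).aestronglyMeasurable)
      ((hH t).integrable x) ((hH' t).integrable x).aestronglyMeasurable
      (fun s y => (hH' s).2 x y) (integrable_const (w' x)) (fun s y => hdiff s x y)
  exact hasDerivAt_integral_of_forall_abs_le (fun t => (hH t).aestronglyMeasurable_integral)
    ((hH z).integrable_integral hw) (hH' z).aestronglyMeasurable_integral
    (fun t x => (hH' t).abs_integral_le x) (hw'.mul_const _) inner

end ParametricIntegral

theorem integrableOn_closedBall_comp_norm {E : Type*} [NormedAddCommGroup E]
    [InnerProductSpace ℝ E] [FiniteDimensional ℝ E] [MeasurableSpace E] [BorelSpace E]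
    [Nontrivial E] (μ : Measure E) [μ.IsAddHaarMeasure] {Φ : ℝ → ℝ} {R : ℝ}
    (hΦ : IntegrableOn Φ (Icc 0 R)) :
    IntegrableOn (fun x : E => Φ ‖x‖) (closedBall 0 R) μ := by
  have hball : IntegrableOn (fun x : E => Φ ‖x‖) (ball 0 R) μ := by
    rw [integrableOn_fun_norm_addHaar]
    exact (hΦ.continuousOn_smul (continuous_pow _).continuousOn isCompact_Icc).mono_set
      Ioo_subset_Icc_self
  rw [← ball_union_sphere]
  exact hball.union (.of_measure_zero (Measure.addHaar_sphere μ 0 R))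

def IsBddContinuous {α : Type*} [TopologicalSpace α] (G : α → ℝ → ℝ) : Prop :=
  Continuous (uncurry G) ∧ ∃ C, ∀ x t, |G x t| ≤ C

section Collision

instance (d : ℕ) : IsFiniteMeasure (sphMeas d) := by
  unfold sphMeas; infer_instance

variable {d : ℕ} {R : ℝ} {Φ : ℝ → ℝ}

/- `QRp R Φ β G F v t` is by definition `∫ q in closedBall 0 R, ∫ σ, gainIntegrand Φ β G F v t q σ`
and `QRm R Φ β G F v t = F v t * ∫ q in closedBall 0 R, ∫ σ, lossIntegrand Φ β G v t q σ`. -/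
def gainIntegrand (Φ : ℝ → ℝ) (β : ℝ → ℝ → ℝ) (G F : Vs d → ℝ → ℝ) (v : Vs d) (t : ℝ)
    (q : Vs d) (σ : sphere (0 : Vs d) 1) : ℝ :=
  Φ ‖q‖ * β ⟪(σ : Vs d), ‖q‖⁻¹ • q⟫ t * G (v - (1 / 2 : ℝ) • q - (‖q‖ / 2) • (σ : Vs d)) t *
    F (v - (1 / 2 : ℝ) • q + (‖q‖ / 2) • (σ : Vs d)) t

def lossIntegrand (Φ : ℝ → ℝ) (β : ℝ → ℝ → ℝ) (G : Vs d → ℝ → ℝ) (v : Vs d) (t : ℝ)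
    (q : Vs d) (σ : sphere (0 : Vs d) 1) : ℝ :=
  Φ ‖q‖ * β ⟪(σ : Vs d), ‖q‖⁻¹ • q⟫ t * G (v - q) t

lemma measurable_angularFactor {β : ℝ → ℝ → ℝ} (hβ : Continuous (uncurry β)) (t : ℝ) :
    Measurable (uncurry fun (q : Vs d) (σ : sphere (0 : Vs d) 1) =>
      β ⟪(σ : Vs d), ‖q‖⁻¹ • q⟫ t) :=
  (hβ.comp₂ continuous_id continuous_const).measurable.comp (by fun_prop)

lemma measurable_velocityFactor {G : Vs d → ℝ → ℝ} (hG : Continuous (uncurry G))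
    {x : Vs d → sphere (0 : Vs d) 1 → Vs d} (hx : Continuous (uncurry x)) (t : ℝ) :
    Measurable (uncurry fun q σ => G (x q σ) t) :=
  (hG.comp₂ hx continuous_const).measurable

lemma dominatedBy_norm_comp (hΦm : Measurable Φ) (hΦ0 : ∀ s, 0 ≤ Φ s) :
    DominatedBy (fun q : Vs d => Φ ‖q‖) (fun q (_ : sphere (0 : Vs d) 1) => Φ ‖q‖) :=
  .of_nonneg (hΦm.comp measurable_norm) fun q => hΦ0 ‖q‖

lemma exists_dominatedBy_gainIntegrand (hΦm : Measurable Φ) (hΦ0 : ∀ s, 0 ≤ Φ s)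
    {β : ℝ → ℝ → ℝ} {G F : Vs d → ℝ → ℝ} (hβ : IsBddContinuous β) (hG : IsBddContinuous G)
    (hF : IsBddContinuous F) (v : Vs d) :
    ∃ C, ∀ t, DominatedBy (fun q : Vs d => Φ ‖q‖ * C) (gainIntegrand Φ β G F v t) := by
  obtain ⟨hβc, Cβ, hβC⟩ := hβ
  obtain ⟨hGc, CG, hGC⟩ := hG
  obtain ⟨hFc, CF, hFC⟩ := hF
  refine ⟨Cβ * CG * CF, fun t => ?_⟩
  have h : DominatedBy (fun q : Vs d => Φ ‖q‖ * Cβ * CG * CF) (gainIntegrand Φ β G F v t) :=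
    (((dominatedBy_norm_comp hΦm hΦ0).mul (measurable_angularFactor hβc t) fun _ _ => hβC _ _).mul
      (measurable_velocityFactor hGc (by fun_prop) t) fun _ _ => hGC _ _).mul
      (measurable_velocityFactor hFc (by fun_prop) t) fun _ _ => hFC _ _
  exact ⟨h.1, fun q σ => (h.2 q σ).trans_eq (by ring)⟩

lemma exists_dominatedBy_lossIntegrand (hΦm : Measurable Φ) (hΦ0 : ∀ s, 0 ≤ Φ s)
    {β : ℝ → ℝ → ℝ} {G : Vs d → ℝ → ℝ} (hβ : IsBddContinuous β) (hG : IsBddContinuous G)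
    (v : Vs d) :
    ∃ C, ∀ t, DominatedBy (fun q : Vs d => Φ ‖q‖ * C) (lossIntegrand Φ β G v t) := by
  obtain ⟨hβc, Cβ, hβC⟩ := hβ
  obtain ⟨hGc, CG, hGC⟩ := hG
  refine ⟨Cβ * CG, fun t => ?_⟩
  have h : DominatedBy (fun q : Vs d => Φ ‖q‖ * Cβ * CG) (lossIntegrand Φ β G v t) :=
    ((dominatedBy_norm_comp hΦm hΦ0).mul (measurable_angularFactor hβc t) fun _ _ => hβC _ _).mul
      (measurable_velocityFactor hGc (by fun_prop) t) fun _ _ => hGC _ _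
  exact ⟨h.1, fun q σ => (h.2 q σ).trans_eq (by ring)⟩

variable {b bz : ℝ → ℝ → ℝ} {g gz f fz : Vs d → ℝ → ℝ}

lemma hasDerivAt_gainIntegrand (hbd : ∀ s t, HasDerivAt (b s) (bz s t) t)
    (hgd : ∀ x t, HasDerivAt (g x) (gz x t) t) (hfd : ∀ x t, HasDerivAt (f x) (fz x t) t)
    (v : Vs d) (t : ℝ) (q : Vs d) (σ : sphere (0 : Vs d) 1) :
    HasDerivAt (gainIntegrand Φ b g f v · q σ)
      (gainIntegrand Φ bz g f v t q σ + gainIntegrand Φ b gz f v t q σ +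
        gainIntegrand Φ b g fz v t q σ) t := by
  simp only [gainIntegrand]
  exact ((((hasDerivAt_const t _).mul (hbd _ t)).mul (hgd _ t)).mul (hfd _ t)).congr_deriv
    (by simp only [Pi.mul_apply]; ring)

lemma hasDerivAt_lossIntegrand (hbd : ∀ s t, HasDerivAt (b s) (bz s t) t)
    (hgd : ∀ x t, HasDerivAt (g x) (gz x t) t) (v : Vs d) (t : ℝ) (q : Vs d)
    (σ : sphere (0 : Vs d) 1) :
    HasDerivAt (lossIntegrand Φ b g v · q σ)
      (lossIntegrand Φ bz g v t q σ + lossIntegrand Φ b gz v t q σ) t := by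
  simp only [lossIntegrand]
  exact (((hasDerivAt_const t _).mul (hbd _ t)).mul (hgd _ t)).congr_deriv
    (by simp only [Pi.mul_apply]; ring)

theorem hasDerivAt_QRp (hΦ : IntegrableOn (fun q : Vs d => Φ ‖q‖) (closedBall 0 R))
    (hΦm : Measurable Φ) (hΦ0 : ∀ s, 0 ≤ Φ s) (hb : IsBddContinuous b)
    (hbz : IsBddContinuous bz) (hbd : ∀ s t, HasDerivAt (b s) (bz s t) t)
    (hg : IsBddContinuous g) (hgz : IsBddContinuous gz) (hgd : ∀ x t, HasDerivAt (g x) (gz x t) t)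
    (hf : IsBddContinuous f) (hfz : IsBddContinuous fz) (hfd : ∀ x t, HasDerivAt (f x) (fz x t) t)
    (v : Vs d) (z : ℝ) :
    HasDerivAt (fun t => QRp R Φ b g f v t)
      (QRp R Φ bz g f v z + QRp R Φ b gz f v z + QRp R Φ b g fz v z) z := by
  obtain ⟨C, hC⟩ := exists_dominatedBy_gainIntegrand hΦm hΦ0 hb hg hf v
  obtain ⟨C₁, hC₁⟩ := exists_dominatedBy_gainIntegrand hΦm hΦ0 hbz hg hf v
  obtain ⟨C₂, hC₂⟩ := exists_dominatedBy_gainIntegrand hΦm hΦ0 hb hgz hf v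
  obtain ⟨C₃, hC₃⟩ := exists_dominatedBy_gainIntegrand hΦm hΦ0 hb hg hfz v
  have hw (c : ℝ) : IntegrableOn (fun q : Vs d => Φ ‖q‖ * c) (closedBall 0 R) := hΦ.mul_const c
  have key := hasDerivAt_integral_integral (ν := sphMeas d) (hw C)
    (((hw C₁).add (hw C₂)).add (hw C₃)) hC (fun t => ((hC₁ t).add (hC₂ t)).add (hC₃ t))
    (hasDerivAt_gainIntegrand hbd hgd hfd v) z
  rwa [integral_integral_add ((hw C₁).add (hw C₂)) (hw C₃) ((hC₁ z).add (hC₂ z)) (hC₃ z),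
    integral_integral_add (hw C₁) (hw C₂) (hC₁ z) (hC₂ z)] at key

theorem hasDerivAt_QRm (hΦ : IntegrableOn (fun q : Vs d => Φ ‖q‖) (closedBall 0 R))
    (hΦm : Measurable Φ) (hΦ0 : ∀ s, 0 ≤ Φ s) (hb : IsBddContinuous b)
    (hbz : IsBddContinuous bz) (hbd : ∀ s t, HasDerivAt (b s) (bz s t) t)
    (hg : IsBddContinuous g) (hgz : IsBddContinuous gz) (hgd : ∀ x t, HasDerivAt (g x) (gz x t) t)
    (hfd : ∀ x t, HasDerivAt (f x) (fz x t) t) (v : Vs d) (z : ℝ) :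
    HasDerivAt (fun t => QRm R Φ b g f v t)
      (QRm R Φ bz g f v z + QRm R Φ b gz f v z + QRm R Φ b g fz v z) z := by
  obtain ⟨C, hC⟩ := exists_dominatedBy_lossIntegrand hΦm hΦ0 hb hg v
  obtain ⟨C₁, hC₁⟩ := exists_dominatedBy_lossIntegrand hΦm hΦ0 hbz hg v
  obtain ⟨C₂, hC₂⟩ := exists_dominatedBy_lossIntegrand hΦm hΦ0 hb hgz v
  have hw (c : ℝ) : IntegrableOn (fun q : Vs d => Φ ‖q‖ * c) (closedBall 0 R) := hΦ.mul_const c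
  have key := hasDerivAt_integral_integral (ν := sphMeas d) (hw C) ((hw C₁).add (hw C₂)) hC
    (fun t => (hC₁ t).add (hC₂ t)) (hasDerivAt_lossIntegrand hbd hgd v) z
  rw [integral_integral_add (hw C₁) (hw C₂) (hC₁ z) (hC₂ z)] at key
  refine ((hfd v z).mul key).congr_deriv ?_
  simp only [QRm, lossIntegrand]
  ring

end Collision

theorem collision_z_Leibniz_rule_general
    (d : ℕ) (hd : 2 ≤ d) (R : ℝ)
    (Φ : ℝ → ℝ) (hΦm : Measurable Φ) (hΦ0 : ∀ s, 0 ≤ Φ s)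
    (MΦ : ℝ) (hMΦ : ∀ᵐ s ∂(volume.restrict (Set.Icc (0 : ℝ) R)), Φ s ≤ MΦ)
    (b bz : ℝ → ℝ → ℝ)
    (hbc : Continuous (uncurry b)) (hbzc : Continuous (uncurry bz))
    (hbd : ∀ s z, HasDerivAt (b s) (bz s z) z)
    (Cb : ℝ) (hbB : ∀ s z, |b s z| ≤ Cb ∧ |bz s z| ≤ Cb)
    (g f gz fz : Vs d → ℝ → ℝ)
    (hgc : Continuous (uncurry g)) (hfc : Continuous (uncurry f))
    (hgzc : Continuous (uncurry gz)) (hfzc : Continuous (uncurry fz))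
    (hgd : ∀ (v : Vs d) (z : ℝ), HasDerivAt (g v) (gz v z) z)
    (hfd : ∀ (v : Vs d) (z : ℝ), HasDerivAt (f v) (fz v z) z)
    (M : ℝ)
    (hMb : ∀ (v : Vs d) (z : ℝ),
      |g v z| ≤ M ∧ |gz v z| ≤ M ∧ |f v z| ≤ M ∧ |fz v z| ≤ M) :
    ∀ (v : Vs d) (z : ℝ),
      HasDerivAt (fun t => QRfull R Φ b g f v t)
        (QRfull R Φ b gz f v z + QRfull R Φ b g fz v z +
          QRfull R Φ bz g f v z) z := by
  intro v z
  have : Nontrivial (Vs d) :=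
    Module.nontrivial_of_finrank_pos (R := ℝ) (by rw [finrank_euclideanSpace_fin]; omega)
  have hΦ : IntegrableOn (fun q : Vs d => Φ ‖q‖) (closedBall 0 R) :=
    integrableOn_closedBall_comp_norm volume <|
      Measure.integrableOn_of_bounded measure_Icc_lt_top.ne hΦm.aestronglyMeasurable <|
        hMΦ.mono fun s hs => (Real.norm_of_nonneg (hΦ0 s)).trans_le hs
  have hb : IsBddContinuous b := ⟨hbc, Cb, fun s t => (hbB s t).1⟩
  have hbz : IsBddContinuous bz := ⟨hbzc, Cb, fun s t => (hbB s t).2⟩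
  have hg : IsBddContinuous g := ⟨hgc, M, fun x t => (hMb x t).1⟩
  have hgz : IsBddContinuous gz := ⟨hgzc, M, fun x t => (hMb x t).2.1⟩
  have hf : IsBddContinuous f := ⟨hfc, M, fun x t => (hMb x t).2.2.1⟩
  have hfz : IsBddContinuous fz := ⟨hfzc, M, fun x t => (hMb x t).2.2.2⟩
  refine ((hasDerivAt_QRp hΦ hΦm hΦ0 hb hbz hbd hg hgz hgd hf hfz hfd v z).sub
    (hasDerivAt_QRm hΦ hΦm hΦ0 hb hbz hbd hg hgz hgd hfd v z)).congr_deriv ?_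
  simp only [QRfull]
  ring

/-- Leibniz rule in the random variable:
`∂_z Q^R(g,f) = Q^R(∂_z g, f) + Q^R(g, ∂_z f) + Q^R_{∂_z b}(g,f)` pointwise, where
`Q^R_{∂_z b}` is obtained from `Q^R` by replacing the angular factor `b` by `∂_z b`. -/
theorem collision_z_Leibniz_rule
    (d : ℕ) (hd : 2 ≤ d) (L R : ℝ) (hR : 0 < R) (hRL : R ≤ L)
    (Iz : Set ℝ)
    (Φ : ℝ → ℝ) (hΦm : Measurable Φ) (hΦ0 : ∀ s, 0 ≤ Φ s)
    (MΦ : ℝ) (hMΦ : ∀ᵐ s ∂(volume.restrict (Set.Icc (0 : ℝ) R)), Φ s ≤ MΦ)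
    (b bz : ℝ → ℝ → ℝ)
    (hbc : Continuous (uncurry b)) (hbzc : Continuous (uncurry bz))
    (hbd : ∀ s z, HasDerivAt (b s) (bz s z) z)
    (hb0 : ∀ s z, z ∈ Iz → 0 < b s z)
    (Cb : ℝ) (hbB : ∀ s z, |b s z| ≤ Cb ∧ |bz s z| ≤ Cb)
    (g f gz fz : Vs d → ℝ → ℝ)
    (hgc : Continuous (uncurry g)) (hfc : Continuous (uncurry f))
    (hgzc : Continuous (uncurry gz)) (hfzc : Continuous (uncurry fz))
    (hgd : ∀ (v : Vs d) (z : ℝ), HasDerivAt (g v) (gz v z) z)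
    (hfd : ∀ (v : Vs d) (z : ℝ), HasDerivAt (f v) (fz v z) z)
    (M : ℝ)
    (hMb : ∀ (v : Vs d) (z : ℝ),
      |g v z| ≤ M ∧ |gz v z| ≤ M ∧ |f v z| ≤ M ∧ |fz v z| ≤ M)
    (hgper : PeriodicV L g) (hfper : PeriodicV L f) :
    ∀ (v : Vs d) (z : ℝ),
      HasDerivAt (fun t => QRfull R Φ b g f v t)
        (QRfull R Φ b gz f v z + QRfull R Φ b g fz v z +
          QRfull R Φ bz g f v z) z :=
  collision_z_Leibniz_rule_general d hd R Φ hΦm hΦ0 MΦ hMΦ b bz hbc hbzc hbd Cb hbB g f gz fz hgc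
    hfc hgzc hfzc hgd hfd M hMb
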